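/- Let W := {(−√−q·(θ⌟Θ)_K, θ) : θ ∈ K ⊗_F U*} ⊆ V_K be the graph of the K-linear extension of the map U* → U, θ ↦ −√−q·(θ⌟Θ). Then W is a maximal isotropic subspace of V_K with respect to the K-bilinear extension of the hyperbolic form ⟨(w₁,θ₁),(w₂,θ₂)⟩ = θ₁(w₂) + θ₂(w₁), and W ∩ σ(W) = 0; consequently V_K = W ⊕ σ(W). -/

import Mathlib

/-!
Setup: `F` a field of characteristic zero, `q ∈ F` with `−q` not a square in `F`,
`K = F(√−q)` (a field `K ⊇ F` generated by an element `s` with `s² = −q`) with nontrivial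
`F`-automorphism `ι`; `U` a finite-dimensional `F`-vector space, `V := U × U*`,
`V_K := K ⊗[F] V`, `σ := ι ⊗ id`.  `Θ ∈ ∧²U` is nondegenerate, with contraction map
`c : U* → U`, `c θ = θ⌟Θ` (characterized by `ι (c θ) = θ⌟Θ` in `∧U`).
`W := {(−√−q·(θ⌟Θ)_K, θ)} ⊆ V_K` is the graph of the `K`-linear extension of
`θ ↦ −√−q·(θ⌟Θ)`, realized as the `K`-span of the vectors
`(−s)·(1 ⊗ (c θ, 0)) + 1 ⊗ (0, θ)`, `θ ∈ U*`.  `b_K` is the `K`-bilinear extension of the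
hyperbolic form `⟨(w₁,θ₁),(w₂,θ₂)⟩ = θ₁(w₂) + θ₂(w₁)`.
-/

open scoped TensorProduct

/-- The `ι`-semilinear automorphism `σ := ι ⊗ id_V` of `V_K = K ⊗[F] V`. -/
noncomputable def sigmaMap (F : Type*) [Field F] (K : Type*) [Field K] [Algebra F K]
    (V : Type*) [AddCommGroup V] [Module F V] (ι : K ≃ₐ[F] K) :
    K ⊗[F] V →ₗ[F] K ⊗[F] V :=
  TensorProduct.map ι.toLinearMap LinearMap.id

/-- The graph `W = {(−s·(θ⌟Θ)_K, θ) : θ ∈ K ⊗ U*} ⊆ V_K` of the `K`-linear extension of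
`θ ↦ −s·(c θ)`, realized as the `K`-span of its values on `1 ⊗ U*`. -/
noncomputable def Wgraph (F : Type*) [Field F] (K : Type*) [Field K] [Algebra F K] (s : K)
    (U : Type*) [AddCommGroup U] [Module F U] (c : Module.Dual F U →ₗ[F] U) :
    Submodule K (K ⊗[F] (U × Module.Dual F U)) :=
  Submodule.span K (Set.range fun θ : Module.Dual F U =>
    (-s) • ((1 : K) ⊗ₜ[F] ((c θ, 0) : U × Module.Dual F U))
      + (1 : K) ⊗ₜ[F] (((0 : U), θ) : U × Module.Dual F U))

/-!
Under `K ⊗ (U × U*) ≃ (K ⊗ U) × (K ⊗ U*)`, `W` is the graph of `-s • c_K`. As `s² ∈ F`, `ι s = ±s`,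
and `ι s ≠ s` because `s` generates `K`; so `ι s = -s ≠ s` and `σ(W)` is the graph of `s • c_K`.
Two graphs of `f, g` meet trivially and together span the whole space as soon as `f - g` is
bijective; here `f - g = -2s • c_K` is, because `c` is bijective (injective between spaces of
equal finite dimension) and `2s ≠ 0`.
Isotropy of `W` comes down to the antisymmetry `θ (c θ') = -θ' (c θ)` of contraction with a
bivector, which is `θ⌟θ'⌟ = -θ'⌟θ⌟`.
-/

open TensorProduct

namespace LinearMap

section Graph

variable {R M N : Type*} [Ring R] [AddCommGroup M] [Module R M] [AddCommGroup N] [Module R N]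
  {f g : N →ₗ[R] M}

theorem range_prod_id_inf_eq_bot (h : Function.Injective (f - g)) :
    range (f.prod id) ⊓ range (g.prod id) = ⊥ := by
  rw [eq_bot_iff]
  rintro _ ⟨⟨u, rfl⟩, ⟨v, hv⟩⟩
  obtain rfl : v = u := congrArg Prod.snd hv
  have hgf : g v = f v := congrArg Prod.fst hv
  have hv0 : v = 0 := h (by rw [sub_apply, hgf, sub_self, map_zero])
  simp [hv0]

theorem range_prod_id_sup_eq_top (h : Function.Surjective (f - g)) :
    range (f.prod id) ⊔ range (g.prod id) = ⊤ := by
  refine eq_top_iff.2 fun ⟨m, n⟩ _ => ?_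
  obtain ⟨u, hu⟩ := h (m - g n)
  refine Submodule.mem_sup.2 ⟨_, ⟨u, rfl⟩, _, ⟨n - u, rfl⟩, Prod.ext ?_ (by simp)⟩
  rw [sub_apply, sub_eq_sub_iff_add_eq_add] at hu
  change f u + g (n - u) = m
  rw [map_sub, add_sub, hu, add_sub_cancel_right]

end Graph

theorem apply_apply_eq_zero_of_mem_span {R M N P : Type*} [CommSemiring R] [AddCommMonoid M]
    [Module R M] [AddCommMonoid N] [Module R N] [AddCommMonoid P] [Module R P]
    (B : M →ₗ[R] N →ₗ[R] P) {s : Set M} {t : Set N} (h : ∀ x ∈ s, ∀ y ∈ t, B x y = 0)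
    {x : M} (hx : x ∈ Submodule.span R s) {y : N} (hy : y ∈ Submodule.span R t) :
    B x y = 0 := by
  have hxt : ∀ y ∈ t, B x y = 0 := fun y hy =>
    (Submodule.span_le (p := ker (B.flip y))).2 (fun x hx => h x hx y hy) hx
  exact (Submodule.span_le (p := ker (B x))).2 hxt hy

end LinearMap

theorem AlgEquiv.apply_ne_self_of_adjoin_singleton_eq_top {F K : Type*} [CommRing F] [Ring K]
    [Algebra F K] {ι : K ≃ₐ[F] K} (hι : ι ≠ AlgEquiv.refl) {s : K}
    (hgen : Algebra.adjoin F {s} = ⊤) : ι s ≠ s := by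
  refine fun hs => hι (AlgEquiv.coe_toAlgHom_injective ?_)
  exact AlgHom.ext_of_adjoin_eq_top hgen fun _ hx => (Set.mem_singleton_iff.1 hx) ▸ hs

theorem AlgEquiv.apply_eq_neg_of_sq_eq_algebraMap {F K : Type*} [CommRing F] [Field K]
    [Algebra F K] (ι : K ≃ₐ[F] K) {s : K} {a : F} (hs : s ^ 2 = algebraMap F K a)
    (hne : ι s ≠ s) : ι s = -s :=
  (sq_eq_sq_iff_eq_or_eq_neg.1 (by rw [← map_pow, hs, ι.commutes])).resolve_left hne

theorem ExteriorAlgebra.apply_add_apply_eq_zero_of_ι_eq_contractLeft {F U : Type*} [Field F]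
    [AddCommGroup U] [Module F U] {Θ : ExteriorAlgebra F U} {c : Module.Dual F U →ₗ[F] U}
    (hc : ∀ θ : Module.Dual F U,
      ExteriorAlgebra.ι F (c θ) = CliffordAlgebra.contractLeft (Q := (0 : QuadraticForm F U)) θ Θ)
    (θ θ' : Module.Dual F U) : θ (c θ') + θ' (c θ) = 0 := by
  rw [← ExteriorAlgebra.algebraMap_eq_zero_iff (M := U), map_add,
    ← CliffordAlgebra.contractLeft_ι (Q := (0 : QuadraticForm F U)),
    ← CliffordAlgebra.contractLeft_ι (Q := (0 : QuadraticForm F U)), hc, hc,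
    CliffordAlgebra.contractLeft_comm, neg_add_cancel]

theorem TensorProduct.span_range_mk_one_eq_top (F K M : Type*) [CommSemiring F] [Semiring K]
    [Algebra F K] [AddCommMonoid M] [Module F M] :
    Submodule.span K (Set.range (TensorProduct.mk F K M 1)) = ⊤ := by
  simpa using (Submodule.baseChange_span (R := F) (A := K) (Set.univ : Set M)).symm

section Wgraph

variable {F K U : Type*} [Field F] [Field K] [Algebra F K] [AddCommGroup U] [Module F U]
  (c : Module.Dual F U →ₗ[F] U)

theorem map_prodRight_Wgraph (t : K) :
    (Wgraph F K t U c).map (prodRight F K K U (Module.Dual F U)).toLinearMap =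
      LinearMap.range (((-t) • c.baseChange K).prod LinearMap.id) := by
  rw [Wgraph, Submodule.map_span, ← Set.range_comp, LinearMap.range_eq_map,
    ← span_range_mk_one_eq_top, Submodule.map_span, ← Set.range_comp]
  congr 2
  funext θ
  simp [-neg_smul]

theorem rank_Wgraph [FiniteDimensional F U] (t : K) :
    Module.rank K (Wgraph F K t U c) = Module.finrank F U := by
  rw [← LinearEquiv.rank_map_eq (prodRight F K K U (Module.Dual F U)), map_prodRight_Wgraph,
    rank_range_of_injective _ fun _ _ h => congrArg Prod.snd h,
    ← Module.finrank_eq_rank, Module.finrank_baseChange, Subspace.dual_finrank_eq]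

theorem Wgraph_inf_eq_bot (hc : Function.Injective c) {t t' : K} (h : t ≠ t') :
    Wgraph F K t U c ⊓ Wgraph F K t' U c = ⊥ := by
  let e := prodRight F K K U (Module.Dual F U)
  apply Submodule.map_injective_of_injective e.injective
  rw [Submodule.map_inf _ e.injective, map_prodRight_Wgraph, map_prodRight_Wgraph,
    Submodule.map_bot]
  apply LinearMap.range_prod_id_inf_eq_bot
  rw [show (-t) • c.baseChange K - (-t') • c.baseChange K = (t' - t) • c.baseChange K by module]
  have hcK : Function.Injective (c.baseChange K) := by
    rw [LinearMap.baseChange_eq_ltensor]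
    exact Module.Flat.lTensor_preserves_injective_linearMap c hc
  exact (smul_right_injective _ (sub_ne_zero.2 h.symm)).comp hcK

theorem Wgraph_sup_eq_top (hc : Function.Surjective c) {t t' : K} (h : t ≠ t') :
    Wgraph F K t U c ⊔ Wgraph F K t' U c = ⊤ := by
  let e := prodRight F K K U (Module.Dual F U)
  apply Submodule.map_injective_of_injective e.injective
  rw [Submodule.map_sup, map_prodRight_Wgraph, map_prodRight_Wgraph, Submodule.map_top,
    LinearEquiv.range]
  apply LinearMap.range_prod_id_sup_eq_top
  rw [show (-t) • c.baseChange K - (-t') • c.baseChange K = (t' - t) • c.baseChange K by module]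
  exact (MulAction.surjective₀ (sub_ne_zero.2 h.symm)).comp (c.baseChange_surjective K hc)

theorem Wgraph_isotropic (hskew : ∀ θ θ' : Module.Dual F U, θ (c θ') + θ' (c θ) = 0)
    (bK : K ⊗[F] (U × Module.Dual F U) →ₗ[K] K ⊗[F] (U × Module.Dual F U) →ₗ[K] K)
    (hbK : ∀ (x y : K) (v w : U × Module.Dual F U),
      bK (x ⊗ₜ[F] v) (y ⊗ₜ[F] w) = x * y * algebraMap F K (v.2 w.1 + w.2 v.1)) (t : K) :
    ∀ a ∈ Wgraph F K t U c, ∀ b ∈ Wgraph F K t U c, bK a b = 0 := by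
  intro a ha b hb
  refine bK.apply_apply_eq_zero_of_mem_span ?_ ha hb
  rintro _ ⟨θ, rfl⟩ _ ⟨θ', rfl⟩
  simp only [map_add, map_smul, LinearMap.add_apply, LinearMap.smul_apply, hbK, smul_eq_mul]
  have hskewK : algebraMap F K (θ (c θ')) + algebraMap F K (θ' (c θ)) = 0 := by
    rw [← map_add, hskew, map_zero]
  simp only [LinearMap.zero_apply, map_zero, add_zero, zero_add, mul_one, one_mul]
  linear_combination (-t) * hskewK

noncomputable def sigmaSemilinearMap (V : Type*) [AddCommGroup V] [Module F V] (ι : K ≃ₐ[F] K) :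
    K ⊗[F] V →ₛₗ[(ι.toRingEquiv : K →+* K)] K ⊗[F] V where
  toFun := sigmaMap F K V ι
  map_add' := map_add _
  map_smul' k x := by
    induction x using TensorProduct.induction_on with
    | zero => simp
    | tmul a v => simp [sigmaMap, smul_tmul']
    | add x y hx hy => simp_all [smul_add]

theorem map_sigmaMap_Wgraph (ι : K ≃ₐ[F] K) (t : K) :
    ((Wgraph F K t U c).restrictScalars F).map (sigmaMap F K _ ι) =
      (Wgraph F K (ι t) U c).restrictScalars F := by
  change ((Wgraph F K t U c).map (sigmaSemilinearMap _ ι)).restrictScalars F = _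
  rw [Wgraph, Submodule.map_span, ← Set.range_comp]
  congr 3
  funext θ
  show sigmaMap F K _ ι _ = _
  simp [sigmaMap, smul_tmul']

end Wgraph

theorem stmt16_general (F : Type*) [Field F] (q : F)
    (K : Type*) [Field K] [Algebra F K] (s : K) (hs : s ^ 2 = algebraMap F K (-q))
    (hgen : Algebra.adjoin F ({s} : Set K) = ⊤)
    (ι : K ≃ₐ[F] K) (hι : ι ≠ AlgEquiv.refl)
    (U : Type*) [AddCommGroup U] [Module F U] [FiniteDimensional F U]
    (Θ : ExteriorAlgebra F U)
    (c : Module.Dual F U →ₗ[F] U)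
    (hc : ∀ θ : Module.Dual F U,
      ExteriorAlgebra.ι F (c θ) =
        CliffordAlgebra.contractLeft (Q := (0 : QuadraticForm F U)) θ Θ)
    (hcnd : Function.Injective c)
    (bK : K ⊗[F] (U × Module.Dual F U) →ₗ[K] K ⊗[F] (U × Module.Dual F U) →ₗ[K] K)
    (hbK : ∀ (x y : K) (v w : U × Module.Dual F U),
      bK (x ⊗ₜ[F] v) (y ⊗ₜ[F] w) = x * y * algebraMap F K (v.2 w.1 + w.2 v.1)) :
    (∀ a ∈ Wgraph F K s U c, ∀ b ∈ Wgraph F K s U c, bK a b = 0)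
    ∧ Module.rank K (Wgraph F K s U c) = (Module.finrank F U : Cardinal)
    ∧ ((Wgraph F K s U c).restrictScalars F)
        ⊓ ((Wgraph F K s U c).restrictScalars F).map (sigmaMap F K _ ι) = ⊥
    ∧ ((Wgraph F K s U c).restrictScalars F)
        ⊔ ((Wgraph F K s U c).restrictScalars F).map (sigmaMap F K _ ι) = ⊤ := by
  have hιs : ι s ≠ s := ι.apply_ne_self_of_adjoin_singleton_eq_top hι hgen
  have hιs_neg : ι s = -s := ι.apply_eq_neg_of_sq_eq_algebraMap hs hιs
  have hs_ne : s ≠ -s := fun h => hιs (hιs_neg.trans h.symm)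
  have hσW := map_sigmaMap_Wgraph c ι s
  rw [hιs_neg] at hσW
  have hc_surj : Function.Surjective c :=
    (LinearMap.injective_iff_surjective_of_finrank_eq_finrank Subspace.dual_finrank_eq).1 hcnd
  refine ⟨Wgraph_isotropic c (ExteriorAlgebra.apply_add_apply_eq_zero_of_ι_eq_contractLeft hc)
    bK hbK s, rank_Wgraph c s, ?_, ?_⟩
  · rw [hσW, ← Submodule.restrictScalars_inf, Wgraph_inf_eq_bot c hcnd hs_ne,
      Submodule.restrictScalars_bot]
  · rw [hσW, ← Submodule.restrictScalars_sup, Wgraph_sup_eq_top c hc_surj hs_ne,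
      Submodule.restrictScalars_top]

set_option synthInstance.maxHeartbeats 1000000 in
/-- `W` is a maximal isotropic subspace of `V_K` for the `K`-bilinear
extension of the hyperbolic form, and `W ∩ σ(W) = 0`; consequently `V_K = W ⊕ σ(W)`. -/
theorem stmt16 (F : Type*) [Field F] [CharZero F] (q : F) (hq : ∀ x : F, x ^ 2 ≠ -q)
    (K : Type*) [Field K] [Algebra F K] (s : K) (hs : s ^ 2 = algebraMap F K (-q))
    (hgen : Algebra.adjoin F ({s} : Set K) = ⊤)
    (ι : K ≃ₐ[F] K) (hι : ι ≠ AlgEquiv.refl)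
    (U : Type*) [AddCommGroup U] [Module F U] [FiniteDimensional F U]
    (Θ : ExteriorAlgebra F U)
    (hΘ : Θ ∈ (LinearMap.range (ExteriorAlgebra.ι F : U →ₗ[F] ExteriorAlgebra F U)) ^ 2)
    (c : Module.Dual F U →ₗ[F] U)
    (hc : ∀ θ : Module.Dual F U,
      ExteriorAlgebra.ι F (c θ) =
        CliffordAlgebra.contractLeft (Q := (0 : QuadraticForm F U)) θ Θ)
    (hcnd : Function.Injective c)
    (bK : K ⊗[F] (U × Module.Dual F U) →ₗ[K] K ⊗[F] (U × Module.Dual F U) →ₗ[K] K)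
    (hbK : ∀ (x y : K) (v w : U × Module.Dual F U),
      bK (x ⊗ₜ[F] v) (y ⊗ₜ[F] w) = x * y * algebraMap F K (v.2 w.1 + w.2 v.1)) :
    (∀ a ∈ Wgraph F K s U c, ∀ b ∈ Wgraph F K s U c, bK a b = 0)
    ∧ Module.rank K (Wgraph F K s U c) = (Module.finrank F U : Cardinal)
    ∧ ((Wgraph F K s U c).restrictScalars F)
        ⊓ ((Wgraph F K s U c).restrictScalars F).map (sigmaMap F K _ ι) = ⊥
    ∧ ((Wgraph F K s U c).restrictScalars F)
        ⊔ ((Wgraph F K s U c).restrictScalars F).map (sigmaMap F K _ ι) = ⊤ :=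
  stmt16_general F q K s hs hgen ι hι U Θ c hc hcnd bK hbK
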